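/- Let c ≥ 2, ñ ≥ 3, n = cñ, and let W be either the uniform-gossiping matrix W̄_{P^u} or the effective-resistance gossiping matrix W̄_{P^r} of the c-barbell graph. For every nonempty subset S₀ of {1,…,n} with |S₀| ≤ n/2 whose complement induces a connected subgraph of the c-barbell graph, there exists c₀ ∈ {1,…,⌊c/2⌋} such that Φ_{V_{c₀}}(W) ≤ Φ_{S₀}(W), where V_{c₀} = B₁ ∪ … ∪ B_{c₀} is the vertex set of the first c₀ blocks and Φ_S(W) = (1/|S|)·Σ_{i∈S, j∉S} W_{ij}. -/

import Mathlib

open Matrix BigOperators Finset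

/-- The `c`-barbell graph on `c*tn` vertices (0-indexed): for each `k = 0,…,c−1` the block
`B_k = {k*tn,…,(k+1)*tn−1}` induces a complete graph (two vertices are in the same block iff
their values have the same quotient by `tn`), and for each `k = 1,…,c−1` there is a bridge edge
between vertex `k*tn − 1` and vertex `k*tn` (i.e. between consecutive vertices `i, i+1` with
`(i+1) % tn = 0`). -/
def cBarbell (c tn : ℕ) : SimpleGraph (Fin (c * tn)) where
  Adj i j := i ≠ j ∧ (i.val / tn = j.val / tn ∨
    (j.val = i.val + 1 ∧ (i.val + 1) % tn = 0) ∨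
    (i.val = j.val + 1 ∧ (j.val + 1) % tn = 0))
  symm := by
    constructor
    rintro i j ⟨hne, h⟩
    refine ⟨hne.symm, ?_⟩
    rcases h with h | h | h
    · exact Or.inl h.symm
    · exact Or.inr (Or.inr h)
    · exact Or.inr (Or.inl h)
  loopless := by constructor; rintro i ⟨hne, -⟩; exact hne rfl

instance (c tn : ℕ) : DecidableRel (cBarbell c tn).Adj := fun i j =>
  inferInstanceAs (Decidable (i ≠ j ∧ (i.val / tn = j.val / tn ∨
    (j.val = i.val + 1 ∧ (i.val + 1) % tn = 0) ∨
    (i.val = j.val + 1 ∧ (j.val + 1) % tn = 0))))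

/-- The uniform edge-activation probability matrix: `P^u_{ij} = 1/(n d_i)` on edges, `0` else. -/
noncomputable def probUnif {n : ℕ} (G : SimpleGraph (Fin n)) [DecidableRel G.Adj] :
    Matrix (Fin n) (Fin n) ℝ :=
  Matrix.of fun i j => if G.Adj i j then 1 / ((n : ℝ) * (G.degree i : ℝ)) else 0

/-- The uniform-gossiping matrix `W̄_{P^u} = I − D^u/2 + (P^u + (P^u)ᵀ)/2`, where
`D^u_{ii} = Σ_j (P^u_{ij} + P^u_{ji})`. -/
noncomputable def gossipUnif {n : ℕ} (G : SimpleGraph (Fin n)) [DecidableRel G.Adj] :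
    Matrix (Fin n) (Fin n) ℝ :=
  (1 : Matrix (Fin n) (Fin n) ℝ)
    - (1 / 2 : ℝ) • Matrix.diagonal (fun i => ∑ j, (probUnif G i j + probUnif G j i))
    + (1 / 2 : ℝ) • (probUnif G + (probUnif G)ᵀ)

/-- The effective-resistance edge-activation probabilities on the `c`-barbell graph with
`n = c*tn`: `1/(2(n−1))` on bridge edges, `1/(tn(n−1))` on edges within a block, `0` else. -/
noncomputable def probResCBarbell (c tn : ℕ) : Matrix (Fin (c * tn)) (Fin (c * tn)) ℝ :=
  Matrix.of fun i j =>
    if (cBarbell c tn).Adj i j then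
      (if i.val / tn = j.val / tn then 1 / ((tn : ℝ) * ((c : ℝ) * (tn : ℝ) - 1))
       else 1 / (2 * ((c : ℝ) * (tn : ℝ) - 1)))
    else 0

/-- The effective-resistance gossiping matrix `W̄_{P^r} = I − D^r/2 + P^r` of the `c`-barbell
graph, where `D^r_{ii} = 2 Σ_j P^r_{ij}`. -/
noncomputable def gossipResCBarbell (c tn : ℕ) : Matrix (Fin (c * tn)) (Fin (c * tn)) ℝ :=
  (1 : Matrix (Fin (c * tn)) (Fin (c * tn)) ℝ)
    - (1 / 2 : ℝ) • Matrix.diagonal (fun i => 2 * ∑ j, probResCBarbell c tn i j)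
    + probResCBarbell c tn

/-- The subset conductance `Φ_S(W) = (1/|S|) Σ_{i∈S, j∉S} W_{ij}`. -/
noncomputable def subsetConductance {n : ℕ} (W : Matrix (Fin n) (Fin n) ℝ)
    (S : Finset (Fin n)) : ℝ :=
  (∑ i ∈ S, ∑ j ∈ Sᶜ, W i j) / (S.card : ℝ)


/-!
Take `c₀ = ⌊c/2⌋`. Both matrices vanish on non-edges, give every bridge the same weight `w_b`
and every block edge a weight at least `w₁ ≥ 2 w_b / ñ`. The first `c₀` blocks are left by a
single bridge, so `Φ_{V_{c₀}} = w_b / (c₀ ñ)`. If `S₀` splits a block into `a + b = ñ` vertices,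
it cuts `a b ≥ ñ - 1` block edges, which outweighs `w_b |S₀| / (c₀ ñ)` because
`|S₀| ≤ ⌊n / 2⌋ ≤ 2 c₀ (ñ - 1)`. Otherwise `S₀` is a union of at most `c₀` whole blocks and, the
graph being connected (it contains the path `1, 2, …, n`), it cuts at least one bridge.
-/

section CutWeight

variable {ι : Type*} [Fintype ι] [DecidableEq ι]

def cutWeight (W : Matrix ι ι ℝ) (S : Finset ι) : ℝ := ∑ i ∈ S, ∑ j ∈ Sᶜ, W i j

lemma sum_sum_le_cutWeight {W : Matrix ι ι ℝ} (hW : ∀ i j, i ≠ j → 0 ≤ W i j)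
    {S A B : Finset ι} (hA : A ⊆ S) (hB : B ⊆ Sᶜ) :
    ∑ i ∈ A, ∑ j ∈ B, W i j ≤ cutWeight W S := by
  have hne : ∀ i ∈ S, ∀ j ∈ Sᶜ, i ≠ j := fun i hi j hj h => mem_compl.mp hj (h ▸ hi)
  calc ∑ i ∈ A, ∑ j ∈ B, W i j ≤ ∑ i ∈ A, ∑ j ∈ Sᶜ, W i j :=
        sum_le_sum fun i hi => sum_le_sum_of_subset_of_nonneg hB
          fun j hj _ => hW i j (hne i (hA hi) j hj)
    _ ≤ cutWeight W S := sum_le_sum_of_subset_of_nonneg hA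
          fun i hi _ => sum_nonneg fun j hj => hW i j (hne i hi j hj)

end CutWeight

lemma subsetConductance_eq_cutWeight_div {n : ℕ} (W : Matrix (Fin n) (Fin n) ℝ)
    (S : Finset (Fin n)) : subsetConductance W S = cutWeight W S / #S :=
  rfl

lemma gossipUnif_apply_of_ne {n : ℕ} (G : SimpleGraph (Fin n)) [DecidableRel G.Adj]
    {i j : Fin n} (h : i ≠ j) :
    gossipUnif G i j = (probUnif G i j + probUnif G j i) / 2 := by
  simp only [gossipUnif, Matrix.add_apply, Matrix.sub_apply, Matrix.smul_apply, one_apply_ne h,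
    diagonal_apply_ne _ h, transpose_apply, smul_eq_mul]
  ring

lemma gossipResCBarbell_apply_of_ne {c tn : ℕ} {i j : Fin (c * tn)} (h : i ≠ j) :
    gossipResCBarbell c tn i j = probResCBarbell c tn i j := by
  simp only [gossipResCBarbell, Matrix.add_apply, Matrix.sub_apply, Matrix.smul_apply,
    one_apply_ne h, diagonal_apply_ne _ h, smul_eq_mul]
  ring

namespace CBarbell

variable {c tn : ℕ}

/-- The block `B_{k+1}` of the paper: vertices and blocks are 0-indexed here. -/
def block (c tn k : ℕ) : Finset (Fin (c * tn)) := {i | i.val / tn = k}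

@[simp]
lemma mem_block {k : ℕ} {i : Fin (c * tn)} : i ∈ block c tn k ↔ i.val / tn = k := by
  simp [block]

lemma adj_of_block_eq {i j : Fin (c * tn)} (hij : i ≠ j) (h : i.val / tn = j.val / tn) :
    (cBarbell c tn).Adj i j :=
  ⟨hij, Or.inl h⟩

lemma bridge_cases_of_adj_of_block_ne {i j : Fin (c * tn)} (h : (cBarbell c tn).Adj i j)
    (hb : i.val / tn ≠ j.val / tn) :
    (j.val = i.val + 1 ∧ tn ∣ i.val + 1) ∨ (i.val = j.val + 1 ∧ tn ∣ i.val) := by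
  obtain ⟨-, h | ⟨h1, h2⟩ | ⟨h1, h2⟩⟩ := h
  · exact absurd h hb
  · exact Or.inl ⟨h1, Nat.dvd_of_mod_eq_zero h2⟩
  · exact Or.inr ⟨h1, h1 ▸ Nat.dvd_of_mod_eq_zero h2⟩

lemma pathGraph_le : SimpleGraph.pathGraph (c * tn) ≤ cBarbell c tn := by
  intro u v huv
  wlog h : u.val + 1 = v.val generalizing u v
  · exact (this huv.symm ((SimpleGraph.pathGraph_adj.mp huv).resolve_left h)).symm
  refine ⟨huv.ne, ?_⟩
  by_cases hdvd : tn ∣ u.val + 1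
  · exact Or.inr (Or.inl ⟨h.symm, Nat.mod_eq_zero_of_dvd hdvd⟩)
  · exact Or.inl (h ▸ (Nat.succ_div_of_not_dvd hdvd).symm)

lemma preconnected : (cBarbell c tn).Preconnected :=
  (SimpleGraph.pathGraph_preconnected _).mono pathGraph_le

lemma card_block (htn : 0 < tn) {k : ℕ} (hk : k < c) :
    #(block c tn k) = tn := by
  have hmap : (block c tn k).map Fin.valEmbedding =
      Ico (k * tn) (k * tn + tn) := by
    have : (k + 1) * tn ≤ c * tn := Nat.mul_le_mul_right _ hk
    ext x
    simp only [mem_map, mem_block, Fin.valEmbedding_apply, mem_Ico,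
      Nat.div_eq_iff htn]
    constructor
    · rintro ⟨i, hi, rfl⟩
      omega
    · rintro hx
      exact ⟨⟨x, by rw [add_one_mul] at this; omega⟩, by simp only; omega, rfl⟩
  rw [← card_map, hmap, Nat.card_Ico]
  omega

lemma filter_neighborFinset_block_eq (i : Fin (c * tn)) :
    {j ∈ (cBarbell c tn).neighborFinset i | j.val / tn = i.val / tn} =
      (block c tn (i.val / tn)).erase i := by
  ext j
  simp only [mem_filter, SimpleGraph.mem_neighborFinset, mem_erase, mem_block]
  exact ⟨fun h => ⟨h.1.ne', h.2⟩, fun h => ⟨adj_of_block_eq h.1.symm h.2.symm, h.2⟩⟩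

-- A vertex has at most one bridge since `tn` cannot divide both `i` and `i + 1`.
lemma card_filter_neighborFinset_block_ne_le_one (htn : 2 ≤ tn) (i : Fin (c * tn)) :
    #{j ∈ (cBarbell c tn).neighborFinset i | j.val / tn ≠ i.val / tn} ≤ 1 := by
  have hndvd : ¬ (tn ∣ i.val + 1 ∧ tn ∣ i.val) := fun ⟨h1, h2⟩ =>
    absurd (Nat.le_of_dvd one_pos ((Nat.dvd_add_right h2).mp h1)) (by omega)
  refine card_le_one.mpr fun a ha b hb => ?_
  simp only [mem_filter, SimpleGraph.mem_neighborFinset] at ha hb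
  rcases bridge_cases_of_adj_of_block_ne ha.1 (Ne.symm ha.2) with ⟨ha1, ha2⟩ | ⟨ha1, ha2⟩ <;>
    rcases bridge_cases_of_adj_of_block_ne hb.1 (Ne.symm hb.2) with
      ⟨hb1, hb2⟩ | ⟨hb1, hb2⟩
  · exact Fin.ext (by omega)
  · exact absurd ⟨ha2, hb2⟩ hndvd
  · exact absurd ⟨hb2, ha2⟩ hndvd
  · exact Fin.ext (by omega)

lemma degree_eq (htn : 0 < tn) (i : Fin (c * tn)) :
    (cBarbell c tn).degree i =
      tn - 1 + #{j ∈ (cBarbell c tn).neighborFinset i | j.val / tn ≠ i.val / tn} := by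
  have hi : i.val / tn < c := (Nat.div_lt_iff_lt_mul htn).mpr i.isLt
  rw [← SimpleGraph.card_neighborFinset_eq_degree,
    ← card_filter_add_card_filter_not (fun j : Fin (c * tn) => j.val / tn = i.val / tn),
    filter_neighborFinset_block_eq, card_erase_of_mem (by simp), card_block htn hi]

lemma degree_le (htn : 2 ≤ tn) (i : Fin (c * tn)) : (cBarbell c tn).degree i ≤ tn := by
  have := card_filter_neighborFinset_block_ne_le_one htn i
  rw [degree_eq (by omega)]
  omega

lemma degree_eq_of_adj_of_block_ne (htn : 2 ≤ tn) {i j : Fin (c * tn)}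
    (h : (cBarbell c tn).Adj i j) (hb : i.val / tn ≠ j.val / tn) :
    (cBarbell c tn).degree i = tn := by
  have : 0 < #{j ∈ (cBarbell c tn).neighborFinset i | j.val / tn ≠ i.val / tn} :=
    card_pos.mpr ⟨j, by simpa using ⟨h, Ne.symm hb⟩⟩
  exact le_antisymm (degree_le htn i) (by rw [degree_eq (by omega)]; omega)


lemma card_le_of_forall_block_ne (htn : 0 < tn) {S : Finset (Fin (c * tn))}
    (hS : ∀ i ∈ S, ∀ j ∉ S, i.val / tn ≠ j.val / tn) (hS2 : 2 * #S ≤ c * tn) :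
    #S ≤ c / 2 * tn := by
  suffices hdvd : tn ∣ #S by
    obtain ⟨q, hq⟩ := hdvd
    have : 2 * q ≤ c := Nat.le_of_mul_le_mul_right (by rw [hq] at hS2; linarith) htn
    rw [hq, mul_comm]
    exact Nat.mul_le_mul_right tn (by omega)
  rw [card_eq_sum_card_fiberwise (f := fun i : Fin (c * tn) => i.val / tn)
    (t := S.image fun i => i.val / tn) fun i hi => mem_image_of_mem _ hi]
  refine dvd_sum fun k hk => ?_
  obtain ⟨i, hi, rfl⟩ := mem_image.mp hk
  have hfiber : {j ∈ S | j.val / tn = i.val / tn} = block c tn (i.val / tn) := by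
    ext j
    simp only [mem_filter, mem_block, and_iff_right_iff_imp]
    exact fun hj => by_contra fun hjS => hS i hi j hjS hj.symm
  rw [hfiber, card_block htn ((Nat.div_lt_iff_lt_mul htn).mpr i.isLt)]

structure WeightBounds (c tn : ℕ) (W : Matrix (Fin (c * tn)) (Fin (c * tn)) ℝ) (w₁ w_b : ℝ) :
    Prop where
  apply_eq_zero_of_not_adj : ∀ i j, i ≠ j → ¬(cBarbell c tn).Adj i j → W i j = 0
  le_apply_of_block_eq : ∀ i j, i ≠ j → i.val / tn = j.val / tn → w₁ ≤ W i j
  apply_eq_of_block_ne : ∀ i j, (cBarbell c tn).Adj i j → i.val / tn ≠ j.val / tn → W i j = w_b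
  w₁_nonneg : 0 ≤ w₁
  w_b_nonneg : 0 ≤ w_b
  two_mul_w_b_le : 2 * w_b ≤ tn * w₁

namespace WeightBounds

variable {W : Matrix (Fin (c * tn)) (Fin (c * tn)) ℝ} {w₁ w_b : ℝ}

lemma apply_nonneg (hW : WeightBounds c tn W w₁ w_b) {i j : Fin (c * tn)} (hij : i ≠ j) :
    0 ≤ W i j := by
  by_cases hadj : (cBarbell c tn).Adj i j
  · by_cases hb : i.val / tn = j.val / tn
    · exact hW.w₁_nonneg.trans (hW.le_apply_of_block_eq i j hij hb)
    · exact (hW.apply_eq_of_block_ne i j hadj hb).symm ▸ hW.w_b_nonneg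
  · exact (hW.apply_eq_zero_of_not_adj i j hij hadj).ge

-- The only edge leaving the first `m` blocks is the bridge `(m tn - 1, m tn)`.
lemma cutWeight_firstBlocks (hW : WeightBounds c tn W w₁ w_b) (htn : 0 < tn) {m : ℕ}
    (hm : 1 ≤ m) (hmc : m < c) : cutWeight W {i | i.val < m * tn} = w_b := by
  have hmtn : tn ≤ m * tn := Nat.le_mul_of_pos_left tn hm
  have hmc' : m * tn < c * tn := Nat.mul_lt_mul_of_pos_right hmc htn
  set V : Finset (Fin (c * tn)) := {i | i.val < m * tn}
  have hb : ∀ i ∈ V, ∀ j ∈ Vᶜ, i.val / tn ≠ j.val / tn := by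
    intro i hi j hj
    simp only [V, mem_compl, mem_filter, mem_univ, true_and, not_lt] at hi hj
    have h1 : i.val / tn < m := (Nat.div_lt_iff_lt_mul htn).mpr hi
    have h2 : m ≤ j.val / tn := (Nat.le_div_iff_mul_le htn).mpr hj
    omega
  have hcross : ∀ i ∈ V, ∀ j ∈ Vᶜ, W i j ≠ 0 → i.val + 1 = m * tn ∧ j.val = m * tn := by
    intro i hi j hj hWij
    have hadj : (cBarbell c tn).Adj i j := by
      by_contra hadj
      exact hWij (hW.apply_eq_zero_of_not_adj i j (fun h => mem_compl.mp hj (h ▸ hi)) hadj)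
    simp only [V, mem_compl, mem_filter, mem_univ, true_and, not_lt] at hi hj
    have hij := hb i (by simpa [V] using hi) j (by simpa [V] using hj)
    rcases bridge_cases_of_adj_of_block_ne hadj hij with ⟨h1, -⟩ | ⟨h1, -⟩ <;> omega
  set i₀ : Fin (c * tn) := ⟨m * tn - 1, by omega⟩
  set j₀ : Fin (c * tn) := ⟨m * tn, hmc'⟩
  have hi₀ : i₀ ∈ V := by simp only [V, mem_filter, mem_univ, true_and, i₀]; omega
  have hj₀ : j₀ ∈ Vᶜ := by simp [V, j₀]
  have hadj : (cBarbell c tn).Adj i₀ j₀ :=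
    pathGraph_le (SimpleGraph.pathGraph_adj.mpr (Or.inl (by simp only [i₀, j₀]; omega)))
  calc cutWeight W V = W i₀ j₀ := by
        rw [cutWeight, sum_eq_single_of_mem i₀ hi₀, sum_eq_single_of_mem j₀ hj₀]
        · intro j hj hjj₀
          by_contra hWij
          exact hjj₀ (Fin.ext (hcross i₀ hi₀ j hj hWij).2)
        · refine fun i hi hii₀ => sum_eq_zero fun j hj => ?_
          by_contra hWij
          exact hii₀ (Fin.ext (by have := (hcross i hi j hj hWij).1; simp only [i₀]; omega))
    _ = w_b := hW.apply_eq_of_block_ne i₀ j₀ hadj (hb i₀ hi₀ j₀ hj₀)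

-- If `S` splits a block into `a + b = tn` vertices, the `a * b ≥ tn - 1` block edges are cut.
lemma le_cutWeight_of_block_eq (hW : WeightBounds c tn W w₁ w_b) (htn : 0 < tn)
    {S : Finset (Fin (c * tn))} {i j : Fin (c * tn)} (hi : i ∈ S) (hj : j ∉ S)
    (hb : i.val / tn = j.val / tn) : ((tn : ℝ) - 1) * w₁ ≤ cutWeight W S := by
  set A := {x ∈ block c tn (i.val / tn) | x ∈ S}
  set B := {x ∈ block c tn (i.val / tn) | x ∉ S}
  have hcard : #A + #B = tn := by
    rw [card_filter_add_card_filter_not, card_block htn ((Nat.div_lt_iff_lt_mul htn).mpr i.isLt)]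
  have hA : 1 ≤ #A := card_pos.mpr ⟨i, by simp [A, hi]⟩
  have hB : 1 ≤ #B := card_pos.mpr ⟨j, by simp [B, hj, hb]⟩
  have hsplit : ((tn : ℝ) - 1) ≤ #A * #B := by
    have hcardR : (#A : ℝ) + #B = tn := by exact_mod_cast hcard
    have : (1 : ℝ) ≤ #A := by exact_mod_cast hA
    have : (1 : ℝ) ≤ #B := by exact_mod_cast hB
    nlinarith
  calc ((tn : ℝ) - 1) * w₁ ≤ #A * #B * w₁ := mul_le_mul_of_nonneg_right hsplit hW.w₁_nonneg
    _ = ∑ x ∈ A, ∑ y ∈ B, w₁ := by simp only [sum_const, nsmul_eq_mul]; ring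
    _ ≤ ∑ x ∈ A, ∑ y ∈ B, W x y := by
        refine sum_le_sum fun x hx => sum_le_sum fun y hy => ?_
        simp only [A, B, mem_filter, mem_block] at hx hy
        exact hW.le_apply_of_block_eq x y (fun h => hy.2 (h ▸ hx.2)) (hx.1.trans hy.1.symm)
    _ ≤ cutWeight W S := sum_sum_le_cutWeight (fun _ _ => hW.apply_nonneg)
        (fun x hx => (mem_filter.mp hx).2) (fun y hy => mem_compl.mpr (mem_filter.mp hy).2)

-- The graph is connected, so some edge leaves `S`; it is a bridge when no block is split.
lemma le_cutWeight_of_forall_block_ne (hW : WeightBounds c tn W w₁ w_b)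
    {S : Finset (Fin (c * tn))} (hS : ∀ i ∈ S, ∀ j ∉ S, i.val / tn ≠ j.val / tn)
    {i j : Fin (c * tn)} (hi : i ∈ S) (hj : j ∉ S) : w_b ≤ cutWeight W S := by
  obtain ⟨p⟩ := preconnected (c := c) (tn := tn) i j
  obtain ⟨⟨⟨u, v⟩, huv⟩, -, hu : u ∈ S, hv : v ∉ S⟩ :=
    p.exists_boundary_dart (S : Set (Fin (c * tn))) hi hj
  calc w_b = ∑ x ∈ {u}, ∑ y ∈ {v}, W x y := by
        rw [sum_singleton, sum_singleton, hW.apply_eq_of_block_ne u v huv (hS u hu v hv)]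
    _ ≤ cutWeight W S := sum_sum_le_cutWeight (fun _ _ => hW.apply_nonneg)
        (singleton_subset_iff.mpr hu) (singleton_subset_iff.mpr (mem_compl.mpr hv))

theorem subsetConductance_firstBlocks_le (hW : WeightBounds c tn W w₁ w_b) (hc : 2 ≤ c)
    (htn : 3 ≤ tn) {S : Finset (Fin (c * tn))} (hS : S.Nonempty) (hS2 : 2 * #S ≤ c * tn) :
    subsetConductance W {i | i.val < c / 2 * tn} ≤ subsetConductance W S := by
  set m := c / 2
  have hm : 1 ≤ m := by omega
  have hmtn : 0 < m * tn := by positivity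
  have hV : #{i : Fin (c * tn) | i.val < m * tn} = m * tn := by
    rw [Fin.card_filter_val_lt, min_eq_right (Nat.mul_le_mul_right _ (Nat.div_le_self c 2))]
  obtain ⟨i, hi⟩ := hS
  obtain ⟨j, hj⟩ : ∃ j, j ∉ S := by
    by_contra! h
    rw [eq_univ_of_forall h, card_univ, Fintype.card_fin] at hS2
    have := i.isLt
    omega
  rw [subsetConductance_eq_cutWeight_div, subsetConductance_eq_cutWeight_div,
    hW.cutWeight_firstBlocks (by omega) hm (by omega), hV,
    div_le_div_iff₀ (by exact_mod_cast hmtn) (by exact_mod_cast card_pos.mpr ⟨i, hi⟩)]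
  have hw_b := hW.w_b_nonneg
  by_cases hsplit : ∃ i ∈ S, ∃ j ∉ S, i.val / tn = j.val / tn
  · obtain ⟨i, hi, j, hj, hb⟩ := hsplit
    have hcut := hW.le_cutWeight_of_block_eq (by omega) hi hj hb
    have hcm : c * tn ≤ 2 * (m * tn) + tn := by
      calc c * tn ≤ (2 * m + 1) * tn := Nat.mul_le_mul_right tn (by omega)
        _ = 2 * (m * tn) + tn := by ring
    have hmn : 3 * m + tn ≤ m * tn + 3 := by nlinarith
    have hS' : (#S : ℝ) + 2 * m ≤ 2 * (m * tn) := by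
      exact_mod_cast (by omega : #S + 2 * m ≤ 2 * (m * tn))
    have htnR : (1 : ℝ) ≤ tn := by exact_mod_cast (by omega : 1 ≤ tn)
    calc w_b * #S ≤ w_b * (2 * m * (tn - 1)) := by gcongr; linarith
      _ = 2 * w_b * (m * (tn - 1)) := by ring
      _ ≤ tn * w₁ * (m * (tn - 1)) :=
        mul_le_mul_of_nonneg_right hW.two_mul_w_b_le (mul_nonneg (by positivity) (by linarith))
      _ = (tn - 1) * w₁ * ((m * tn : ℕ) : ℝ) := by push_cast; ring
      _ ≤ cutWeight W S * ((m * tn : ℕ) : ℝ) := by gcongr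
  · push Not at hsplit
    have hSm : (#S : ℝ) ≤ ((m * tn : ℕ) : ℝ) := by
      exact_mod_cast card_le_of_forall_block_ne (by omega) hsplit hS2
    calc w_b * #S ≤ w_b * ((m * tn : ℕ) : ℝ) := by gcongr
      _ ≤ cutWeight W S * ((m * tn : ℕ) : ℝ) := by
        gcongr; exact hW.le_cutWeight_of_forall_block_ne hsplit hi hj

end WeightBounds

lemma probUnif_apply_of_adj {i j : Fin (c * tn)} (h : (cBarbell c tn).Adj i j) :
    probUnif (cBarbell c tn) i j = 1 / (((c * tn : ℕ) : ℝ) * (cBarbell c tn).degree i) := by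
  simp [probUnif, h]

lemma one_div_le_probUnif (htn : 2 ≤ tn) {i j : Fin (c * tn)} (h : (cBarbell c tn).Adj i j) :
    1 / (((c * tn : ℕ) : ℝ) * tn) ≤ probUnif (cBarbell c tn) i j := by
  have hn : (0 : ℝ) < (c * tn : ℕ) := by exact_mod_cast i.pos
  have hdeg : (0 : ℝ) < (cBarbell c tn).degree i := by
    exact_mod_cast (SimpleGraph.degree_pos_iff_exists_adj _ i).mpr ⟨j, h⟩
  rw [probUnif_apply_of_adj h]
  gcongr
  exact_mod_cast degree_le htn i

lemma weightBounds_gossipUnif (htn : 2 ≤ tn) :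
    WeightBounds c tn (gossipUnif (cBarbell c tn))
      (1 / (((c * tn : ℕ) : ℝ) * tn)) (1 / (((c * tn : ℕ) : ℝ) * tn)) where
  apply_eq_zero_of_not_adj i j hij hadj := by
    have hadj' : ¬(cBarbell c tn).Adj j i := fun h => hadj h.symm
    simp [gossipUnif_apply_of_ne _ hij, probUnif, hadj, hadj']
  le_apply_of_block_eq i j hij hb := by
    have hadj := adj_of_block_eq hij hb
    rw [gossipUnif_apply_of_ne _ hij]
    linarith [one_div_le_probUnif htn hadj, one_div_le_probUnif htn hadj.symm]
  apply_eq_of_block_ne i j hadj hb := by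
    rw [gossipUnif_apply_of_ne _ hadj.ne, probUnif_apply_of_adj hadj,
      probUnif_apply_of_adj hadj.symm, degree_eq_of_adj_of_block_ne htn hadj hb,
      degree_eq_of_adj_of_block_ne htn hadj.symm (Ne.symm hb)]
    ring
  w₁_nonneg := by positivity
  w_b_nonneg := by positivity
  two_mul_w_b_le := by
    have : (2 : ℝ) ≤ tn := by exact_mod_cast htn
    nlinarith [show 0 ≤ 1 / (((c * tn : ℕ) : ℝ) * tn) by positivity]

lemma weightBounds_gossipResCBarbell (hc : 0 < c) (htn : 0 < tn) :
    WeightBounds c tn (gossipResCBarbell c tn)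
      (1 / ((tn : ℝ) * ((c : ℝ) * tn - 1))) (1 / (2 * ((c : ℝ) * tn - 1))) := by
  have hn : (0 : ℝ) ≤ c * tn - 1 := by
    have : (1 : ℝ) ≤ c * tn := by exact_mod_cast Nat.one_le_iff_ne_zero.mpr (by positivity)
    linarith
  have htn' : (tn : ℝ) ≠ 0 := by positivity
  exact
    { apply_eq_zero_of_not_adj := fun i j hij hadj => by
        simp [gossipResCBarbell_apply_of_ne hij, probResCBarbell, hadj]
      le_apply_of_block_eq := fun i j hij hb => by
        simp [gossipResCBarbell_apply_of_ne hij, probResCBarbell, adj_of_block_eq hij hb, hb]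
      apply_eq_of_block_ne := fun i j hadj hb => by
        simp [gossipResCBarbell_apply_of_ne hadj.ne, probResCBarbell, hadj, hb]
      w₁_nonneg := by positivity
      w_b_nonneg := by positivity
      two_mul_w_b_le := le_of_eq (by field_simp) }

end CBarbell

open CBarbell in
theorem stmt12_general (c tn : ℕ) (hc : 2 ≤ c) (htn : 3 ≤ tn)
    (W : Matrix (Fin (c * tn)) (Fin (c * tn)) ℝ)
    (hW : W = gossipUnif (cBarbell c tn) ∨ W = gossipResCBarbell c tn)
    (S0 : Finset (Fin (c * tn)))
    (hS0ne : S0.Nonempty) (hS0card : 2 * S0.card ≤ c * tn) :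
    ∃ c0 : ℕ, 1 ≤ c0 ∧ c0 ≤ c / 2 ∧
      subsetConductance W (Finset.univ.filter (fun i => i.val < c0 * tn)) ≤
        subsetConductance W S0 := by
  refine ⟨c / 2, by omega, le_rfl, ?_⟩
  rcases hW with rfl | rfl
  · exact (weightBounds_gossipUnif (by omega)).subsetConductance_firstBlocks_le hc htn hS0ne
      hS0card
  · exact (weightBounds_gossipResCBarbell (by omega) (by omega)).subsetConductance_firstBlocks_le
      hc htn hS0ne hS0card

/-- For `W` either the uniform-gossiping or the effective-resistance gossiping matrix of the
`c`-barbell graph, and any nonempty one-cut set `S₀` with `|S₀| ≤ n/2` (its complement induces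
a connected subgraph), there is `c₀ ∈ {1,…,⌊c/2⌋}` such that the first `c₀` blocks
`V_{c₀}` satisfy `Φ_{V_{c₀}}(W) ≤ Φ_{S₀}(W)`. -/
theorem stmt12 (c tn : ℕ) (hc : 2 ≤ c) (htn : 3 ≤ tn)
    (W : Matrix (Fin (c * tn)) (Fin (c * tn)) ℝ)
    (hW : W = gossipUnif (cBarbell c tn) ∨ W = gossipResCBarbell c tn)
    (S0 : Finset (Fin (c * tn)))
    (hS0ne : S0.Nonempty) (hS0card : 2 * S0.card ≤ c * tn)
    (hconn : ((cBarbell c tn).induce ((↑S0ᶜ : Set (Fin (c * tn))))).Connected) :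
    ∃ c0 : ℕ, 1 ≤ c0 ∧ c0 ≤ c / 2 ∧
      subsetConductance W (Finset.univ.filter (fun i => i.val < c0 * tn)) ≤
        subsetConductance W S0 :=
  stmt12_general c tn hc htn W hW S0 hS0ne hS0card
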